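/- For every z ∈ ℂ with Re(z) ≠ 0, the forward orbit of z under P_0 is well defined (it never meets 0, since each open half plane is forward invariant) and tends to infinity: |P_0⁽ⁿ⁾(z)| → ∞ as n → ∞, where P_0⁽ⁿ⁾ denotes the n-th iterate. That is, both the right and the left open half planes are contained in the basin of attraction of the fixed point at infinity. -/

import Mathlib

/-!
Writing `r = |Re w|` and `s = |w|²`, one step of `P₀` sends `r ↦ r + r / s` and
`s ↦ s - 2 + (4 r² + 1) / s`; in particular `r` never decreases, so the orbit stays in its
half plane. If `r` stayed below some `M`, the second recursion would keep `s` below a bound `B`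
(the drift `-2` wins as soon as `s ≥ 4 M² + 1`), and then the first would make `r` grow by at
least `r₀ / B` at every step, which is absurd. Hence `|w| ≥ r → ∞`.
-/

open Filter

noncomputable def P₀ (z : ℂ) : ℂ := z + 1/z

section RealSequences

variable {u : ℕ → ℝ}

theorem le_max_of_succ_le_max {B : ℝ} (h : ∀ n, u (n + 1) ≤ max (u n) B) (n : ℕ) :
    u n ≤ max (u 0) B := by
  induction n with
  | zero => exact le_max_left _ _
  | succ n ih => exact (h n).trans (max_le ih (le_max_right _ _))

theorem le_max_of_le_sub_one_add_div {c C : ℝ} (hc : 0 < c) (hC : 0 ≤ C) (hlow : ∀ n, c ≤ u n)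
    (hstep : ∀ n, u (n + 1) ≤ u n - 1 + C / u n) (n : ℕ) : u n ≤ max (u 0) (C + C / c) := by
  refine le_max_of_succ_le_max (fun n => ?_) n
  have hpos : 0 < u n := hc.trans_le (hlow n)
  rcases le_or_gt C (u n) with hle | hlt
  · have : C / u n ≤ 1 := (div_le_one hpos).2 hle
    exact le_max_of_le_left (by linarith [hstep n])
  · have : C / u n ≤ C / c := div_le_div_of_nonneg_left hC hc (hlow n)
    exact le_max_of_le_right (by linarith [hstep n])

theorem tendsto_atTop_of_add_le_succ {δ : ℝ} (hδ : 0 < δ) (h : ∀ n, u n + δ ≤ u (n + 1)) :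
    Tendsto u atTop atTop := by
  have hlin : ∀ n : ℕ, u 0 + n * δ ≤ u n := by
    intro n
    induction n with
    | zero => simp
    | succ n ih => push_cast; linarith [h n]
  refine tendsto_atTop_mono hlin (tendsto_atTop_add_const_left _ _ ?_)
  exact tendsto_natCast_atTop_atTop.atTop_mul_const hδ

variable {r s : ℕ → ℝ}

theorem monotone_of_succ_eq_add_div (hr : ∀ n, 0 < r n) (hs : ∀ n, 0 < s n)
    (hr_succ : ∀ n, r (n + 1) = r n + r n / s n) : Monotone r :=
  monotone_nat_of_le_succ fun n => by
    rw [hr_succ n]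
    exact le_add_of_nonneg_right (div_pos (hr n) (hs n)).le

theorem tendsto_atTop_of_succ_eq_add_div_of_le {B : ℝ} (hr : ∀ n, 0 < r n)
    (hs : ∀ n, 0 < s n) (hr_succ : ∀ n, r (n + 1) = r n + r n / s n) (hsB : ∀ n, s n ≤ B) :
    Tendsto r atTop atTop := by
  have hmono := monotone_of_succ_eq_add_div hr hs hr_succ
  refine tendsto_atTop_of_add_le_succ (div_pos (hr 0) ((hs 0).trans_le (hsB 0))) fun n => ?_
  rw [hr_succ n]
  linarith [div_le_div₀ (hr n).le (hmono (Nat.zero_le n)) (hs n) (hsB n)]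

theorem tendsto_atTop_of_re_normSq_recursion (hr : ∀ n, 0 < r n)
    (hr_succ : ∀ n, r (n + 1) = r n + r n / s n) (hrs : ∀ n, r n ^ 2 ≤ s n)
    (hs_succ : ∀ n, s (n + 1) = s n - 2 + (4 * r n ^ 2 + 1) / s n) :
    Tendsto r atTop atTop := by
  have hs : ∀ n, 0 < s n := fun n => (pow_pos (hr n) 2).trans_le (hrs n)
  have hmono := monotone_of_succ_eq_add_div hr hs hr_succ
  refine tendsto_atTop_atTop_of_monotone hmono fun M => ?_
  by_contra! hM
  have hlow : ∀ n, r 0 ^ 2 ≤ s n := fun n =>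
    (pow_le_pow_left₀ (hr 0).le (hmono (Nat.zero_le n)) 2).trans (hrs n)
  have hstep : ∀ n, s (n + 1) ≤ s n - 1 + (4 * M ^ 2 + 1) / s n := fun n => by
    have : 4 * r n ^ 2 + 1 ≤ 4 * M ^ 2 + 1 := by
      linarith [pow_le_pow_left₀ (hr n).le (hM n).le 2]
    rw [hs_succ n]
    linarith [div_le_div_of_nonneg_right this (hs n).le]
  have hbdd := le_max_of_le_sub_one_add_div (pow_pos (hr 0) 2) (by positivity) hlow hstep
  obtain ⟨n, hn⟩ :=
    (tendsto_atTop_of_succ_eq_add_div_of_le hr hs hr_succ hbdd).eventually_ge_atTop M |>.exists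
  exact (hM n).not_ge hn

end RealSequences

theorem re_P₀ (w : ℂ) : (P₀ w).re = w.re * (1 + 1 / Complex.normSq w) := by
  simp only [P₀, Complex.add_re, one_div, Complex.inv_re]
  ring

theorem im_P₀ (w : ℂ) : (P₀ w).im = w.im * (1 - 1 / Complex.normSq w) := by
  simp only [P₀, Complex.add_im, one_div, Complex.inv_im]
  ring

theorem abs_re_P₀ (w : ℂ) : |(P₀ w).re| = |w.re| + |w.re| / Complex.normSq w := by
  have := Complex.normSq_nonneg w
  rw [re_P₀, abs_mul, abs_of_pos (by positivity : (0 : ℝ) < 1 + 1 / Complex.normSq w)]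
  ring

theorem re_P₀_ne_zero {w : ℂ} (hw : w.re ≠ 0) : (P₀ w).re ≠ 0 := by
  have := Complex.normSq_nonneg w
  rw [re_P₀]
  exact mul_ne_zero hw (by positivity)

theorem normSq_P₀ {w : ℂ} (hw : w ≠ 0) :
    Complex.normSq (P₀ w) = Complex.normSq w - 2 + (4 * w.re ^ 2 + 1) / Complex.normSq w := by
  have hs : 0 < w.re ^ 2 + w.im ^ 2 := by
    simpa only [Complex.normSq_apply, sq] using Complex.normSq_pos.2 hw
  rw [Complex.normSq_apply, re_P₀, im_P₀, Complex.normSq_apply]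
  field_simp [hs.ne']
  ring

/-- For every `z` with `Re(z) ≠ 0`, the forward orbit of `z` under `P_0` never meets `0`
and tends to infinity: both open half planes are contained in the basin of attraction
of the fixed point at infinity. -/
theorem P0_half_planes_in_basin_of_infinity (z : ℂ) (hz : z.re ≠ 0) :
    (∀ n : ℕ, P₀^[n] z ≠ 0) ∧
    Tendsto (fun n : ℕ => ‖P₀^[n] z‖) atTop atTop := by
  have hre : ∀ n, (P₀^[n] z).re ≠ 0 := fun n =>
    Function.Iterate.rec (fun w : ℂ => w.re ≠ 0) hz (fun _ => re_P₀_ne_zero) n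
  have hne : ∀ n, P₀^[n] z ≠ 0 := fun n h => hre n (by simp [h])
  refine ⟨hne, tendsto_atTop_mono (fun n => Complex.abs_re_le_norm _) ?_⟩
  refine tendsto_atTop_of_re_normSq_recursion (s := fun n => Complex.normSq (P₀^[n] z))
    (fun n => abs_pos.2 (hre n))
    (fun n => ?_) (fun n => ?_) (fun n => ?_)
  · rw [Function.iterate_succ_apply', abs_re_P₀]
  · rw [sq_abs, sq]; exact Complex.re_sq_le_normSq _
  · rw [Function.iterate_succ_apply', normSq_P₀ (hne n), sq_abs]
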